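/- arXiv:1607.01575 — 6 statements merged into one kernel-verified Lean document; each statement's English description precedes it below -/
import Mathlib

section
/- Consistent load model (Theorem 2). Fix ω0 ∈ ℝ with ω0 ≠ 0. Let i_l : ℝ² → ℝ² be continuously differentiable with i_l(0) = 0 and i_l(w)ᵀw ≥ 0 for all w ∈ ℝ². Suppose i_l is consistent with the synchronous steady state, i.e. for every w0 ∈ ℝ² the curve t ↦ i_l(R(ω0 t)·w0) satisfies d/dt i_l(R(ω0 t)·w0) = ω0·j·i_l(R(ω0 t)·w0) for all t ∈ ℝ. Then there exist functions g : ℝ_{≥0} → ℝ_{≥0} and b : ℝ_{≥0} → ℝ such that i_l(w) = (g(‖w‖)·I₂ + b(‖w‖)·j)·w for all w ∈ ℝ². -/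
/-!
Consistency says that along every synchronous orbit the load current solves `u' = ω₀ j u`, whose
solutions are `u t = R(ω₀ t) u 0`; hence `i_l` commutes with all rotations. A rotation-equivariant
map of the plane is determined by its values on the positive first axis, where
`i_l (s, 0) = (g s • 1 + b s • j) (s, 0)` defines `g` and `b`; rotating gives the claimed form
everywhere, and `i_l (s, 0) ⬝ᵥ (s, 0) ≥ 0` gives `g ≥ 0`.
-/

noncomputable section
open Matrix

/-- Vectors in ℝ². -/
abbrev V2 : Type := Fin 2 → ℝ
/-- 2×2 real matrices. -/
abbrev M2 : Type := Matrix (Fin 2) (Fin 2) ℝ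

/-- The 90° rotation matrix `j`. -/
def j2 : M2 := !![0, -1; 1, 0]

/-- The rotation matrix `R(θ)`. -/
def Rot (θ : ℝ) : M2 := !![Real.cos θ, -Real.sin θ; Real.sin θ, Real.cos θ]

/-- The unit vector `r(θ) = (cos θ, sin θ)`. -/
def rvec (θ : ℝ) : V2 := ![Real.cos θ, Real.sin θ]

/-- The Euclidean norm on ℝ². -/
def enorm2 (w : V2) : ℝ := Real.sqrt (w 0 ^ 2 + w 1 ^ 2)

lemma j2_mulVec (v : V2) : j2 *ᵥ v = ![-v 1, v 0] := by
  ext i; fin_cases i <;> simp [j2, mulVec, dotProduct]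

lemma Rot_mulVec (θ : ℝ) (v : V2) :
    Rot θ *ᵥ v = ![Real.cos θ * v 0 - Real.sin θ * v 1, Real.sin θ * v 0 + Real.cos θ * v 1] := by
  ext i; fin_cases i <;> simp [Rot, mulVec, dotProduct]; ring

lemma Rot_mulVec_eq_cos_smul_add_sin_smul (θ : ℝ) (v : V2) :
    Rot θ *ᵥ v = Real.cos θ • v + Real.sin θ • (j2 *ᵥ v) := by
  rw [Rot_mulVec, j2_mulVec]
  ext i; fin_cases i <;> simp <;> ring

lemma Rot_mulVec_Rot_mulVec (a b : ℝ) (v : V2) :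
    Rot a *ᵥ (Rot b *ᵥ v) = Rot (a + b) *ᵥ v := by
  simp only [Rot_mulVec]
  ext i; fin_cases i <;> simp [Real.cos_add, Real.sin_add] <;> ring

lemma Rot_zero_mulVec (v : V2) : Rot 0 *ᵥ v = v := by
  rw [Rot_mulVec_eq_cos_smul_add_sin_smul]; simp

lemma Rot_pi_mulVec (v : V2) : Rot Real.pi *ᵥ v = -v := by
  rw [Rot_mulVec_eq_cos_smul_add_sin_smul]; simp

lemma Rot_mulVec_j2_mulVec (θ : ℝ) (v : V2) : Rot θ *ᵥ (j2 *ᵥ v) = j2 *ᵥ (Rot θ *ᵥ v) := by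
  simp only [Rot_mulVec, j2_mulVec]
  ext i; fin_cases i <;> simp <;> ring

lemma j2_mulVec_j2_mulVec (v : V2) : j2 *ᵥ (j2 *ᵥ v) = -v := by
  simp only [j2_mulVec]
  ext i; fin_cases i <;> simp

lemma HasDerivAt.j2_mulVec {c : ℝ → V2} {c' : V2} {t : ℝ} (hc : HasDerivAt c c' t) :
    HasDerivAt (fun s => j2 *ᵥ c s) (j2 *ᵥ c') t :=
  (LinearMap.toContinuousLinearMap (mulVecLin j2)).hasFDerivAt.comp_hasDerivAt t hc

lemma HasDerivAt.Rot_mulVec {θ : ℝ → ℝ} {c : ℝ → V2} {θ' : ℝ} {c' : V2} {t : ℝ}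
    (hθ : HasDerivAt θ θ' t) (hc : HasDerivAt c c' t) :
    HasDerivAt (fun s => Rot (θ s) *ᵥ c s) (Rot (θ t) *ᵥ (c' + θ' • (j2 *ᵥ c t))) t := by
  have h := (hθ.cos.fun_smul hc).fun_add (hθ.sin.fun_smul hc.j2_mulVec)
  simp only [← Rot_mulVec_eq_cos_smul_add_sin_smul] at h
  refine h.congr_deriv ?_
  simp only [Rot_mulVec_eq_cos_smul_add_sin_smul, mulVec_add, mulVec_smul, j2_mulVec_j2_mulVec]
  module

lemma eq_Rot_mulVec_of_hasDerivAt {ω : ℝ} {c : ℝ → V2}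
    (hc : ∀ t, HasDerivAt c (ω • (j2 *ᵥ c t)) t) (t : ℝ) : c t = Rot (ω * t) *ᵥ c 0 := by
  have hderiv : ∀ s, HasDerivAt (fun s => Rot (-(ω * s)) *ᵥ c s) 0 s := fun s =>
    (((hasDerivAt_id' s).const_mul ω).neg.Rot_mulVec (hc s)).congr_deriv
      (by rw [mul_one, neg_smul, add_neg_cancel, mulVec_zero])
  have hconst : Rot (-(ω * t)) *ᵥ c t = c 0 := by
    have h := is_const_of_deriv_eq_zero
      (fun s => (hderiv s).differentiableAt) (fun s => (hderiv s).deriv) t 0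
    simpa only [mul_zero, neg_zero, Rot_zero_mulVec] using h
  calc c t = Rot (ω * t) *ᵥ (Rot (-(ω * t)) *ᵥ c t) := by
        rw [Rot_mulVec_Rot_mulVec, add_neg_cancel, Rot_zero_mulVec]
    _ = Rot (ω * t) *ᵥ c 0 := by rw [hconst]

lemma exists_Rot_mulVec_eq (w : V2) : ∃ θ, Rot θ *ᵥ ![enorm2 w, 0] = w := by
  set z : ℂ := ⟨w 0, w 1⟩
  have hz : ‖z‖ = enorm2 w := by
    rw [Complex.norm_def, Complex.normSq_apply, enorm2]
    simp only [z, sq]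
  refine ⟨z.arg, ?_⟩
  rw [Rot_mulVec, ← hz]
  ext i; fin_cases i <;> simp [mul_comm, Complex.norm_mul_cos_arg, Complex.norm_mul_sin_arg, z]

lemma map_zero_of_Rot_equivariant {f : V2 → V2} (hf : ∀ θ w, f (Rot θ *ᵥ w) = Rot θ *ᵥ f w) :
    f 0 = 0 := by
  have h := hf Real.pi 0
  rw [mulVec_zero, Rot_pi_mulVec] at h
  exact self_eq_neg.mp h

-- The load admittance at voltage magnitude `s` is `conductance f s + susceptance f s • j`.
def conductance (f : V2 → V2) (s : ℝ) : ℝ := f ![s, 0] 0 / s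

def susceptance (f : V2 → V2) (s : ℝ) : ℝ := f ![s, 0] 1 / s

lemma eq_conductance_smul_add_susceptance_smul {f : V2 → V2}
    (hf : ∀ θ w, f (Rot θ *ᵥ w) = Rot θ *ᵥ f w) (w : V2) :
    f w = conductance f (enorm2 w) • w + susceptance f (enorm2 w) • (j2 *ᵥ w) := by
  obtain ⟨θ, hθ⟩ := exists_Rot_mulVec_eq w
  set s := enorm2 w
  have hbase : f ![s, 0] = conductance f s • ![s, 0] + susceptance f s • (j2 *ᵥ ![s, 0]) := by
    rcases eq_or_ne s 0 with hs | hs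
    · have h0 : (![0, 0] : V2) = 0 := by simp
      rw [hs, h0, map_zero_of_Rot_equivariant hf]
      simp
    · rw [j2_mulVec]
      ext i; fin_cases i <;> simp [conductance, susceptance, hs]
  rw [← hθ, hf, hbase, mulVec_add, mulVec_smul, mulVec_smul, Rot_mulVec_j2_mulVec]

lemma conductance_nonneg {f : V2 → V2} (hf : ∀ w, 0 ≤ f w ⬝ᵥ w) (s : ℝ) :
    0 ≤ conductance f s := by
  have h : 0 ≤ f ![s, 0] 0 * s := by simpa [dotProduct] using hf ![s, 0]
  exact div_nonneg_iff.2 (mul_nonneg_iff.1 h)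

theorem consistent_load_model_general (ω0 : ℝ) (hω0 : ω0 ≠ 0) (il : V2 → V2)
    (hdiss : ∀ w : V2, 0 ≤ il w ⬝ᵥ w)
    (hcurve : ∀ (w0 : V2) (t : ℝ),
      HasDerivAt (fun s => il (Rot (ω0 * s) *ᵥ w0))
        (ω0 • (j2 *ᵥ il (Rot (ω0 * t) *ᵥ w0))) t) :
    ∃ g b : ℝ → ℝ, (∀ s : ℝ, 0 ≤ s → 0 ≤ g s) ∧
      ∀ w : V2, il w = g (enorm2 w) • w + b (enorm2 w) • (j2 *ᵥ w) := by
  have hequiv : ∀ θ w, il (Rot θ *ᵥ w) = Rot θ *ᵥ il w := fun θ w => by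
    simpa only [mul_zero, Rot_zero_mulVec, mul_div_cancel₀ θ hω0] using
      eq_Rot_mulVec_of_hasDerivAt (hcurve w) (θ / ω0)
  exact ⟨conductance il, susceptance il, fun s _ => conductance_nonneg hdiss s,
    eq_conductance_smul_add_susceptance_smul hequiv⟩

/-- **Theorem 2, consistent load model.** Let ω₀ ≠ 0 and let
i_l : ℝ² → ℝ² be C¹ with i_l(0) = 0 and i_l(w)ᵀw ≥ 0. If i_l is consistent with the
synchronous steady state, i.e. d/dt i_l(R(ω₀t)w₀) = ω₀ j i_l(R(ω₀t)w₀) along every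
synchronous trajectory, then i_l(w) = (g(‖w‖) I₂ + b(‖w‖) j) w for some
g : ℝ≥0 → ℝ≥0 and b : ℝ≥0 → ℝ. -/
theorem consistent_load_model (ω0 : ℝ) (hω0 : ω0 ≠ 0) (il : V2 → V2)
    (hil : ContDiff ℝ 1 il) (hzero : il 0 = 0) (hdiss : ∀ w : V2, 0 ≤ il w ⬝ᵥ w)
    (hcurve : ∀ (w0 : V2) (t : ℝ),
      HasDerivAt (fun s => il (Rot (ω0 * s) *ᵥ w0))
        (ω0 • (j2 *ᵥ il (Rot (ω0 * t) *ᵥ w0))) t) :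
    ∃ g b : ℝ → ℝ, (∀ s : ℝ, 0 ≤ s → 0 ≤ g s) ∧
      ∀ w : V2, il w = g (enorm2 w) • w + b (enorm2 w) • (j2 *ᵥ w) :=
  consistent_load_model_general ω0 hω0 il hdiss hcurve
end
end

section
/- Synchronous machine inductance derivative identity. For all θ ∈ ℝ, the 5×5 inductance matrix of a synchronous machine satisfies dL(θ)/dθ = 𝒿·L(θ) + L(θ)·𝒿ᵀ, where the derivative is taken entrywise. -/
noncomputable section
open Matrix

/-- Index type for the 5 machine windings: 2 stator + 3 rotor (f, d, q). -/
abbrev I5 : Type := Fin 2 ⊕ Fin 3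
/-- Vectors in ℝ⁵ (machine currents/voltages). -/
abbrev V5 : Type := I5 → ℝ

/-- The 5×5 matrix 𝒿 = diag(j, 0₃ₓ₃). -/
def jj : Matrix I5 I5 ℝ := Matrix.fromBlocks j2 0 0 0

/-- Parameters of a synchronous machine. -/
structure Machine where
  /-- stator winding resistance -/
  rs : ℝ
  /-- excitation winding resistance -/
  rf : ℝ
  /-- d-axis damper winding resistance -/
  rd : ℝ
  /-- q-axis damper winding resistance -/
  rq : ℝ
  /-- stator winding inductance -/
  ls : ℝ
  /-- rotor saliency -/
  lsa : ℝ
  /-- excitation winding inductance -/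
  lf : ℝ
  /-- d-axis damper winding inductance -/
  ld : ℝ
  /-- q-axis damper winding inductance -/
  lq : ℝ
  /-- mutual inductance of excitation and damper winding -/
  lfd : ℝ
  /-- stator–excitation mutual inductance -/
  lsf : ℝ
  /-- stator–d-damper mutual inductance -/
  lsd : ℝ
  /-- stator–q-damper mutual inductance -/
  lsq : ℝ
  /-- rotor inertia -/
  m : ℝ
  /-- rotor damping -/
  d : ℝ
  rs_pos : 0 < rs
  rf_pos : 0 < rf
  rd_pos : 0 < rd
  rq_pos : 0 < rq
  ls_pos : 0 < ls
  lsa_nonneg : 0 ≤ lsa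
  lf_pos : 0 < lf
  ld_pos : 0 < ld
  lq_pos : 0 < lq
  lfd_pos : 0 < lfd
  lsf_pos : 0 < lsf
  lsd_pos : 0 < lsd
  lsq_pos : 0 < lsq
  m_pos : 0 < m
  d_pos : 0 < d

namespace Machine

/-- Stator inductance matrix L_s(θ). -/
def Ls (mc : Machine) (θ : ℝ) : M2 :=
  mc.ls • (1 : M2) + Rot (2 * θ) * !![mc.lsa, 0; 0, -mc.lsa]

/-- Mutual inductance matrix L_m(θ). -/
def Lm (mc : Machine) (θ : ℝ) : Matrix (Fin 2) (Fin 3) ℝ :=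
  Rot θ * !![mc.lsf, mc.lsd, 0; 0, 0, -mc.lsq]

/-- Rotor inductance matrix L_r. -/
def Lr (mc : Machine) : Matrix (Fin 3) (Fin 3) ℝ :=
  !![mc.lf, mc.lfd, 0; mc.lfd, mc.ld, 0; 0, 0, mc.lq]

/-- The 5×5 machine inductance matrix L(θ). -/
def Lmat (mc : Machine) (θ : ℝ) : Matrix I5 I5 ℝ :=
  Matrix.fromBlocks (mc.Ls θ) (mc.Lm θ) (mc.Lm θ)ᵀ mc.Lr

/-- The 5×5 machine resistance matrix R = diag(r_s I₂, r_f, r_d, r_q). -/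
def Rmat (mc : Machine) : Matrix I5 I5 ℝ :=
  Matrix.fromBlocks (mc.rs • (1 : M2)) 0 0 (Matrix.diagonal ![mc.rf, mc.rd, mc.rq])

/-- Electrical torque τ_e = ½ iᵀ(L(θ)𝒿 + 𝒿ᵀL(θ))i. -/
def torque (mc : Machine) (θ : ℝ) (i : V5) : ℝ :=
  (1 / 2) * (i ⬝ᵥ ((mc.Lmat θ * jj + jjᵀ * mc.Lmat θ) *ᵥ i))

/-- Induced voltage v_ind = ω(L(θ)𝒿ᵀ + 𝒿L(θ))i. -/
def vind (mc : Machine) (ω θ : ℝ) (i : V5) : V5 :=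
  ω • ((mc.Lmat θ * jjᵀ + jj * mc.Lmat θ) *ᵥ i)

/-- Stator impedance Z_s(θ) = r_s I₂ + ω₀ j L_s(θ). -/
def Zs (mc : Machine) (ω0 θ : ℝ) : M2 :=
  mc.rs • (1 : M2) + ω0 • (j2 * mc.Ls θ)

/-- The open-circuit stator voltage error ν(θ) = v − Z_s(θ) i_s. -/
def nu (mc : Machine) (ω0 θ : ℝ) (v is : V2) : V2 :=
  v - mc.Zs ω0 θ *ᵥ is

end Machine

/-! Differentiating `R(θ)` gives `j R(θ) = R(θ) j`, so `L_m' = j L_m`. Since `j` anticommutes with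
`diag(l_sa, -l_sa)` and `jᵀ = -j`, also `L_s' = 2 j R(2θ) diag(l_sa, -l_sa) = j L_s + L_s jᵀ`, while
`L_r` is constant. Multiplying the block matrices, `𝒿 L + L 𝒿ᵀ` has exactly these blocks. -/

def HasMatrixDerivAt {m n 𝕜 : Type*} [NontriviallyNormedField 𝕜] (M : 𝕜 → Matrix m n 𝕜)
    (M' : Matrix m n 𝕜) (x : 𝕜) : Prop :=
  ∀ i k, HasDerivAt (fun y => M y i k) (M' i k) x

namespace HasMatrixDerivAt

variable {l m n o 𝕜 : Type*} [NontriviallyNormedField 𝕜] {x : 𝕜}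

theorem const (A : Matrix m n 𝕜) : HasMatrixDerivAt (fun _ => A) 0 x :=
  fun _ _ => hasDerivAt_const x _

theorem const_add {M : 𝕜 → Matrix m n 𝕜} {M' : Matrix m n 𝕜} (A : Matrix m n 𝕜)
    (h : HasMatrixDerivAt M M' x) : HasMatrixDerivAt (fun y => A + M y) M' x :=
  fun i k => (h i k).const_add (A i k)

theorem mul_const [Fintype m] {M : 𝕜 → Matrix l m 𝕜} {M' : Matrix l m 𝕜} (A : Matrix m n 𝕜)
    (h : HasMatrixDerivAt M M' x) : HasMatrixDerivAt (fun y => M y * A) (M' * A) x := by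
  intro i k
  simp only [mul_apply]
  exact HasDerivAt.fun_sum fun j _ => (h i j).mul_const (A j k)

theorem transpose {M : 𝕜 → Matrix m n 𝕜} {M' : Matrix m n 𝕜} (h : HasMatrixDerivAt M M' x) :
    HasMatrixDerivAt (fun y => (M y)ᵀ) M'ᵀ x :=
  fun i k => h k i

theorem fromBlocks {A : 𝕜 → Matrix n l 𝕜} {B : 𝕜 → Matrix n m 𝕜} {C : 𝕜 → Matrix o l 𝕜}
    {D : 𝕜 → Matrix o m 𝕜} {A' B' C' D'} (hA : HasMatrixDerivAt A A' x)
    (hB : HasMatrixDerivAt B B' x) (hC : HasMatrixDerivAt C C' x) (hD : HasMatrixDerivAt D D' x) :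
    HasMatrixDerivAt (fun y => Matrix.fromBlocks (A y) (B y) (C y) (D y))
      (Matrix.fromBlocks A' B' C' D') x := by
  rintro (i | i) (k | k)
  exacts [hA i k, hB i k, hC i k, hD i k]

end HasMatrixDerivAt

theorem hasMatrixDerivAt_rot {f : ℝ → ℝ} {f' x : ℝ} (hf : HasDerivAt f f' x) :
    HasMatrixDerivAt (fun y => Rot (f y)) (f' • (j2 * Rot (f x))) x := by
  intro i k
  fin_cases i <;> fin_cases k
  · exact hf.cos.congr_deriv (by simp [Rot, j2]; ring)
  · exact hf.sin.neg.congr_deriv (by simp [Rot, j2]; ring)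
  · exact hf.sin.congr_deriv (by simp [Rot, j2]; ring)
  · exact hf.cos.congr_deriv (by simp [Rot, j2]; ring)

theorem j2_transpose : j2ᵀ = -j2 := by
  ext i k; fin_cases i <;> fin_cases k <;> simp [j2]

theorem rot_mul_j2 (θ : ℝ) : Rot θ * j2 = j2 * Rot θ := by
  ext i k; fin_cases i <;> fin_cases k <;> simp [Rot, j2]

theorem diagonal_neg_mul_j2 (a : ℝ) : !![a, 0; 0, -a] * j2 = -(j2 * !![a, 0; 0, -a]) := by
  ext i k; fin_cases i <;> fin_cases k <;> simp [j2]

namespace Machine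

theorem j2_mul_Ls_add_Ls_mul_transpose (mc : Machine) (θ : ℝ) :
    j2 * mc.Ls θ + mc.Ls θ * j2ᵀ = (2 : ℝ) • (j2 * Rot (2 * θ)) * !![mc.lsa, 0; 0, -mc.lsa] := by
  simp only [Ls, j2_transpose, mul_add, add_mul, mul_neg, Matrix.mul_smul, Matrix.smul_mul, mul_one,
    one_mul, mul_assoc, diagonal_neg_mul_j2]
  simp only [← mul_assoc, rot_mul_j2]
  module

theorem hasMatrixDerivAt_Ls (mc : Machine) (θ : ℝ) :
    HasMatrixDerivAt mc.Ls (j2 * mc.Ls θ + mc.Ls θ * j2ᵀ) θ := by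
  have hRot : HasMatrixDerivAt (fun y => Rot (2 * y)) ((2 : ℝ) • (j2 * Rot (2 * θ))) θ := by
    simpa using hasMatrixDerivAt_rot ((hasDerivAt_id θ).const_mul 2)
  rw [j2_mul_Ls_add_Ls_mul_transpose]
  exact (hRot.mul_const _).const_add _

theorem hasMatrixDerivAt_Lm (mc : Machine) (θ : ℝ) : HasMatrixDerivAt mc.Lm (j2 * mc.Lm θ) θ := by
  have h := (hasMatrixDerivAt_rot (hasDerivAt_id θ)).mul_const !![mc.lsf, mc.lsd, 0; 0, 0, -mc.lsq]
  rwa [one_smul, Matrix.mul_assoc] at h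

theorem jj_mul_Lmat_add_Lmat_mul_transpose (mc : Machine) (θ : ℝ) :
    jj * mc.Lmat θ + mc.Lmat θ * jjᵀ =
      fromBlocks (j2 * mc.Ls θ + mc.Ls θ * j2ᵀ) (j2 * mc.Lm θ) (j2 * mc.Lm θ)ᵀ 0 := by
  simp [jj, Lmat, fromBlocks_transpose, fromBlocks_multiply, fromBlocks_add, transpose_mul]

theorem hasMatrixDerivAt_Lmat (mc : Machine) (θ : ℝ) :
    HasMatrixDerivAt mc.Lmat (jj * mc.Lmat θ + mc.Lmat θ * jjᵀ) θ := by
  rw [jj_mul_Lmat_add_Lmat_mul_transpose]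
  exact .fromBlocks (mc.hasMatrixDerivAt_Ls θ) (mc.hasMatrixDerivAt_Lm θ)
    (mc.hasMatrixDerivAt_Lm θ).transpose (.const _)

end Machine

/-- Synchronous machine inductance derivative identity:
for all θ, dL(θ)/dθ = 𝒿 L(θ) + L(θ) 𝒿ᵀ, entrywise. -/
theorem inductance_derivative (mc : Machine) (θ : ℝ) (a b : I5) :
    HasDerivAt (fun φ => mc.Lmat φ a b)
      ((jj * mc.Lmat θ + mc.Lmat θ * jjᵀ) a b) θ :=
  mc.hasMatrixDerivAt_Lmat θ a b
end
end

section
/- Invariance of the electrical torque along the steady-state flow. Define the electrical torque τ_e(θ, i) = ½ iᵀ(L(θ)·𝒿 + 𝒿ᵀ·L(θ))·i for θ ∈ ℝ, i ∈ ℝ⁵. Then for all θ ∈ ℝ, i ∈ ℝ⁵, and ω0 ∈ ℝ, the directional derivative of τ_e along the steady-state flow vanishes: (∂τ_e/∂θ)(θ, i)·ω0 + (∇_i τ_e)(θ, i)ᵀ·(ω0·𝒿·i) = 0. -/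
noncomputable section
open Matrix

/-!
Advancing the rotor angle by `t` is the same as rotating the stator frame by `t`:
`L(θ + t) = E(t) L(θ) E(t)ᵀ` with `E(t) = diag(R(t), I₃)`, and `E(t)` commutes with `𝒿`.
Hence `τ_e(θ + t, i) = τ_e(θ, E(t)ᵀ i)`, and differentiating at `t = 0`, where
`d/dt E(t)ᵀ i = 𝒿ᵀ i = -𝒿 i`, gives `∂τ_e/∂θ = -(∇_i τ_e)ᵀ 𝒿 i`.
-/

lemma Rot_add (a b : ℝ) : Rot (a + b) = Rot a * Rot b := by
  ext k l
  fin_cases k <;> fin_cases l <;> simp [Rot, Real.cos_add, Real.sin_add] <;> ring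

lemma Rot_zero : Rot 0 = 1 := by
  ext k l
  fin_cases k <;> fin_cases l <;> simp [Rot]

lemma Rot_transpose (t : ℝ) : (Rot t)ᵀ = Rot (-t) := by
  ext k l
  fin_cases k <;> fin_cases l <;> simp [Rot]

lemma Rot_mul_Rot_neg (t : ℝ) : Rot t * Rot (-t) = 1 := by
  rw [← Rot_add, add_neg_cancel, Rot_zero]

lemma commute_j2_Rot (t : ℝ) : Commute j2 (Rot t) := by
  ext k l
  fin_cases k <;> fin_cases l <;> simp [j2, Rot]

lemma reflection_mul_Rot_neg (a t : ℝ) :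
    !![a, 0; 0, -a] * Rot (-t) = Rot t * !![a, 0; 0, -a] := by
  ext k l
  fin_cases k <;> fin_cases l <;> simp [Rot, mul_comm]

def statorRot (t : ℝ) : Matrix I5 I5 ℝ := fromBlocks (Rot t) 0 0 1

lemma statorRot_zero : statorRot 0 = 1 := by
  simp [statorRot, Rot_zero]

lemma statorRot_transpose (t : ℝ) : (statorRot t)ᵀ = statorRot (-t) := by
  simp [statorRot, fromBlocks_transpose, Rot_transpose]

lemma commute_jj_statorRot (t : ℝ) : Commute jj (statorRot t) := by
  simp [Commute, SemiconjBy, jj, statorRot, fromBlocks_multiply, (commute_j2_Rot t).eq]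

lemma jj_transpose : jjᵀ = -jj := by
  ext (k | k) (l | l) <;> fin_cases k <;> fin_cases l <;> simp [jj, j2]

lemma hasDerivAt_statorRot_transpose_mulVec (i : V5) :
    HasDerivAt (fun t => (statorRot t)ᵀ *ᵥ i) (jjᵀ *ᵥ i) 0 := by
  rw [hasDerivAt_pi]
  rintro (k | k)
  · fin_cases k
    · simpa [statorRot, jj, j2, Rot, fromBlocks_transpose, fromBlocks_mulVec, mulVec, dotProduct]
        using ((Real.hasDerivAt_cos 0).mul_const (i (Sum.inl 0))).fun_add
          ((Real.hasDerivAt_sin 0).mul_const (i (Sum.inl 1)))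
    · simpa [statorRot, jj, j2, Rot, fromBlocks_transpose, fromBlocks_mulVec, mulVec, dotProduct]
        using ((Real.hasDerivAt_sin 0).mul_const (i (Sum.inl 0))).fun_neg.fun_add
          ((Real.hasDerivAt_cos 0).mul_const (i (Sum.inl 1)))
  · simpa [statorRot, jj, fromBlocks_transpose, fromBlocks_mulVec]
      using hasDerivAt_const (0 : ℝ) (i (Sum.inr k))

lemma transpose_mulVec_dotProduct_mulVec_transpose_mulVec {n R : Type*} [Fintype n]
    [CommSemiring R] (U M : Matrix n n R) (x : n → R) :
    (Uᵀ *ᵥ x) ⬝ᵥ M *ᵥ (Uᵀ *ᵥ x) = x ⬝ᵥ (U * M * Uᵀ) *ᵥ x := by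
  rw [← mulVec_mulVec, ← mulVec_mulVec, dotProduct_mulVec x U, ← mulVec_transpose]

namespace Machine

variable (mc : Machine)

lemma Ls_add (θ t : ℝ) : mc.Ls (θ + t) = Rot t * mc.Ls θ * (Rot t)ᵀ := by
  have hrot : Rot (2 * (θ + t)) = Rot t * Rot (2 * θ) * Rot t := by
    rw [← Rot_add, ← Rot_add]; ring_nf
  simp only [Ls, Rot_transpose, Matrix.mul_add, Matrix.add_mul, Matrix.mul_smul, Matrix.smul_mul,
    Matrix.mul_one, Rot_mul_Rot_neg, Matrix.mul_assoc, reflection_mul_Rot_neg, hrot]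

lemma Lm_add (θ t : ℝ) : mc.Lm (θ + t) = Rot t * mc.Lm θ := by
  rw [Lm, Lm, add_comm, Rot_add, Matrix.mul_assoc]

lemma Lmat_add (θ t : ℝ) : mc.Lmat (θ + t) = statorRot t * mc.Lmat θ * (statorRot t)ᵀ := by
  simp [Lmat, statorRot, fromBlocks_transpose, fromBlocks_multiply, mc.Ls_add, mc.Lm_add,
    transpose_mul]

lemma torque_add (θ t : ℝ) (i : V5) :
    mc.torque (θ + t) i = mc.torque θ ((statorRot t)ᵀ *ᵥ i) := by
  have hE : Commute jj (statorRot t)ᵀ := by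
    rw [statorRot_transpose]; exact commute_jj_statorRot _
  have hEt : Commute jjᵀ (statorRot t) := by
    rw [jj_transpose]; exact (commute_jj_statorRot t).neg_left
  rw [torque, torque, transpose_mulVec_dotProduct_mulVec_transpose_mulVec, mc.Lmat_add]
  congr 3
  simp only [Matrix.mul_add, Matrix.add_mul, Matrix.mul_assoc, hE.eq]
  rw [← Matrix.mul_assoc jjᵀ, hEt.eq, Matrix.mul_assoc]

end Machine

theorem deriv_eq_fderiv_of_forall_add_eq {𝕜 E F : Type*} [NontriviallyNormedField 𝕜]
    [NormedAddCommGroup E] [NormedSpace 𝕜 E] [NormedAddCommGroup F] [NormedSpace 𝕜 F]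
    {f : 𝕜 → E → F} {c : 𝕜 → E} {θ : 𝕜} {x v : E} (hf : DifferentiableAt 𝕜 (f θ) x)
    (hc : HasDerivAt c v 0) (hc0 : c 0 = x) (h : ∀ t, f (θ + t) x = f θ (c t)) :
    deriv (fun φ => f φ x) θ = fderiv 𝕜 (f θ) x v := by
  have hcomp : HasDerivAt (fun t => f θ (c t)) (fderiv 𝕜 (f θ) x v) 0 :=
    hf.hasFDerivAt.comp_hasDerivAt_of_eq 0 hc hc0.symm
  rw [← funext h] at hcomp
  simpa using (deriv_comp_const_add (fun φ => f φ x) θ 0).symm.trans hcomp.deriv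

theorem differentiable_dotProduct_mulVec {n : Type*} [Fintype n] (A : Matrix n n ℝ) :
    Differentiable ℝ (fun w : n → ℝ => w ⬝ᵥ A *ᵥ w) := by
  simp only [dotProduct, mulVec]
  fun_prop

/-- The directional derivative of the electrical torque
τ_e(θ,i) = ½ iᵀ(L(θ)𝒿 + 𝒿ᵀL(θ))i along the steady-state flow
(θ̇, i̇) = (ω₀, ω₀ 𝒿 i) vanishes. -/
theorem torque_invariant_along_flow (mc : Machine) (θ : ℝ) (i : V5) (ω0 : ℝ) :
    deriv (fun φ => mc.torque φ i) θ * ω0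
      + fderiv ℝ (fun w : V5 => mc.torque θ w) i (ω0 • (jj *ᵥ i)) = 0 := by
  have hdiff : DifferentiableAt ℝ (mc.torque θ) i :=
    ((differentiable_dotProduct_mulVec _).const_mul _).differentiableAt
  have hderiv : deriv (fun φ => mc.torque φ i) θ = fderiv ℝ (mc.torque θ) i (jjᵀ *ᵥ i) :=
    deriv_eq_fderiv_of_forall_add_eq hdiff (hasDerivAt_statorRot_transpose_mulVec i)
      (by simp [statorRot_zero]) (mc.torque_add θ · i)
  rw [hderiv, jj_transpose, neg_mulVec, map_neg, map_smul, smul_eq_mul]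
  ring
end
end

section
/- Representation of rotation-equivariant maps on the plane. Let h : ℝ² → ℝ² satisfy h(0) = 0 and h(R(φ)·w) = R(φ)·h(w) for all φ ∈ ℝ and w ∈ ℝ². Then there exist functions g : ℝ_{≥0} → ℝ and b : ℝ_{≥0} → ℝ such that h(w) = (g(‖w‖)·I₂ + b(‖w‖)·j)·w for all w ∈ ℝ². -/
/-!
Write `w = R(θ) (‖w‖, 0)` in polar form. Equivariance gives `h w = R(θ) v` with `v = h (‖w‖, 0)`,
and `R(θ) v = v₀ r(θ) + v₁ j r(θ)`; since `w = ‖w‖ r(θ)`, this is `(v₀/‖w‖) w + (v₁/‖w‖) j w`.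
-/

noncomputable section
open Matrix

theorem rot_mulVec (θ : ℝ) (v : V2) :
    Rot θ *ᵥ v = v 0 • rvec θ + v 1 • (j2 *ᵥ rvec θ) := by
  ext i
  fin_cases i <;> simp [Rot, j2, rvec, mulVec, dotProduct, Fin.sum_univ_two, mul_comm]

theorem rot_mulVec_vecCons_zero (θ r : ℝ) : Rot θ *ᵥ ![r, 0] = r • rvec θ := by
  rw [rot_mulVec]
  simp

theorem exists_eq_enorm2_smul_rvec (w : V2) : ∃ θ, w = enorm2 w • rvec θ := by
  let z : ℂ := ⟨w 0, w 1⟩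
  have hz : ‖z‖ = enorm2 w := by
    rw [Complex.norm_def, Complex.normSq_mk, enorm2, sq, sq]
  refine ⟨Complex.arg z, ?_⟩
  ext i
  fin_cases i
  · exact hz ▸ (Complex.norm_mul_cos_arg z).symm
  · exact hz ▸ (Complex.norm_mul_sin_arg z).symm

/-- Representation of rotation-equivariant maps on the plane:
if h(0) = 0 and h(R(φ)w) = R(φ)h(w) for all φ, w, then there exist
g, b : ℝ≥0 → ℝ with h(w) = (g(‖w‖) I₂ + b(‖w‖) j) w for all w. -/
theorem equivariant_map_representation (h : V2 → V2) (h0 : h 0 = 0)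
    (heq : ∀ (φ : ℝ) (w : V2), h (Rot φ *ᵥ w) = Rot φ *ᵥ h w) :
    ∃ g b : ℝ → ℝ, ∀ w : V2,
      h w = g (enorm2 w) • w + b (enorm2 w) • (j2 *ᵥ w) := by
  refine ⟨fun r => h ![r, 0] 0 / r, fun r => h ![r, 0] 1 / r, fun w => ?_⟩
  obtain ⟨θ, hw⟩ := exists_eq_enorm2_smul_rvec w
  set r := enorm2 w
  by_cases hr : r = 0
  · rw [hr, zero_smul] at hw
    simp [hw, h0]
  · have hrot : h w = Rot θ *ᵥ h ![r, 0] := by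
      rw [← heq, rot_mulVec_vecCons_zero, ← hw]
    rw [hrot, rot_mulVec, hw, mulVec_smul, smul_smul, smul_smul, div_mul_cancel₀ _ hr,
      div_mul_cancel₀ _ hr]
end
end

section
/- Machine steady-state electrical equations. Consider a synchronous machine and fix ω0 ∈ ℝ. For i = (i_s, i_f, i_d, i_q) ∈ ℝ² × ℝ × ℝ × ℝ, v ∈ ℝ², and v_f ∈ ℝ, the equation (R + ω0·𝒿·L(θ))·i = (v, v_f, 0, 0) holds if and only if: i_d = 0, i_q = 0, v_f = r_f·i_f, and ω0·l_sf·i_f·(j·r(θ)) = v − (r_s·I₂ + ω0·j·L_s(θ))·i_s. -/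
noncomputable section
open Matrix

/-!
Since 𝒿 vanishes outside the stator block, `R + ω₀ 𝒿 L(θ)` is block upper triangular with the
diagonal rotor resistance matrix in the lower right corner. The rotor rows therefore read
`r_f i_f = v_f`, `r_d i_d = 0`, `r_q i_q = 0`, and once `i_d = i_q = 0` the stator–rotor coupling
`L_m(θ) (i_f, 0, 0)` is just `l_sf i_f r(θ)`.
-/

theorem Matrix.fromBlocks_mulVec_sumElim_eq_sumElim_iff {l m n o α : Type*} [Fintype l]
    [Fintype m] [NonUnitalNonAssocSemiring α] (A : Matrix n l α) (B : Matrix n m α)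
    (C : Matrix o l α) (D : Matrix o m α) (x : l → α) (y : m → α) (u : n → α) (w : o → α) :
    fromBlocks A B C D *ᵥ Sum.elim x y = Sum.elim u w ↔
      A *ᵥ x + B *ᵥ y = u ∧ C *ᵥ x + D *ᵥ y = w := by
  rw [fromBlocks_mulVec, Sum.elim_eq_iff]
  rfl

theorem Matrix.diagonal_mulVec_vecCons_eq_iff {R : Type*} [NonUnitalNonAssocSemiring R]
    [NoZeroDivisors R] {a b c : R} (hb : b ≠ 0) (hc : c ≠ 0) (x y z u : R) :
    diagonal ![a, b, c] *ᵥ ![x, y, z] = ![u, 0, 0] ↔ y = 0 ∧ z = 0 ∧ u = a * x := by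
  simp only [funext_iff, Fin.forall_fin_succ, mulVec_diagonal]
  simpa [hb, hc, eq_comm] using and_rotate

namespace Machine

theorem Rmat_add_smul_jj_mul_Lmat (mc : Machine) (ω0 θ : ℝ) :
    mc.Rmat + ω0 • (jj * mc.Lmat θ) =
      fromBlocks (mc.Zs ω0 θ) (ω0 • (j2 * mc.Lm θ)) 0 (diagonal ![mc.rf, mc.rd, mc.rq]) := by
  simp only [Rmat, jj, Lmat, Zs, fromBlocks_multiply, fromBlocks_smul, fromBlocks_add,
    Matrix.zero_mul, add_zero, smul_zero, zero_add]

theorem Lm_mulVec_excitation (mc : Machine) (θ i_f : ℝ) :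
    mc.Lm θ *ᵥ ![i_f, 0, 0] = (mc.lsf * i_f) • rvec θ := by
  ext k
  fin_cases k <;> simp [Lm, Rot, rvec, mulVec, dotProduct, Fin.sum_univ_three] <;> ring

theorem smul_j2_mul_Lm_mulVec_excitation (mc : Machine) (ω0 θ i_f : ℝ) :
    (ω0 • (j2 * mc.Lm θ)) *ᵥ ![i_f, 0, 0] = (ω0 * mc.lsf * i_f) • (j2 *ᵥ rvec θ) := by
  rw [smul_mulVec, ← mulVec_mulVec, Lm_mulVec_excitation, mulVec_smul, smul_smul, mul_assoc]

end Machine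

/-- Machine steady-state electrical equations:
(R + ω₀ 𝒿 L(θ)) i = (v, v_f, 0, 0) iff i_d = 0, i_q = 0, v_f = r_f i_f, and
ω₀ l_sf i_f (j r(θ)) = v − (r_s I₂ + ω₀ j L_s(θ)) i_s. -/
theorem machine_steady_state_equations (mc : Machine) (ω0 θ : ℝ)
    (is : V2) (i_f i_d i_q : ℝ) (v : V2) (v_f : ℝ) :
    (mc.Rmat + ω0 • (jj * mc.Lmat θ)) *ᵥ Sum.elim is ![i_f, i_d, i_q]
        = Sum.elim v ![v_f, 0, 0]
      ↔ (i_d = 0 ∧ i_q = 0 ∧ v_f = mc.rf * i_f ∧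
          (ω0 * mc.lsf * i_f) • (j2 *ᵥ rvec θ)
            = v - (mc.rs • (1 : M2) + ω0 • (j2 * mc.Ls θ)) *ᵥ is) := by
  rw [mc.Rmat_add_smul_jj_mul_Lmat, fromBlocks_mulVec_sumElim_eq_sumElim_iff, zero_mulVec,
    zero_add, diagonal_mulVec_vecCons_eq_iff mc.rd_pos.ne' mc.rq_pos.ne', eq_sub_iff_add_eq']
  constructor
  · rintro ⟨hs, rfl, rfl, hf⟩
    exact ⟨rfl, rfl, hf, by rwa [← mc.smul_j2_mul_Lm_mulVec_excitation]⟩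
  · rintro ⟨rfl, rfl, hf, hs⟩
    exact ⟨by rwa [mc.smul_j2_mul_Lm_mulVec_excitation], rfl, rfl, hf⟩
end
end

section
/- Solvability of the rotor angle and excitation current equation. For α_c ≥ 0, α_sa ≥ 0, δ_c, δ_sa ∈ ℝ, define ε(θ) = α_c·r(δ_c − θ) + α_sa·r(δ_sa + θ) for θ ∈ ℝ, and let a ∈ ℝ with a ≠ 0. Then there exist a pair (i_f, θ) ∈ ℝ_{≥0} × ℝ and a pair (i_f', θ') ∈ ℝ_{≤0} × ℝ such that i_f·(a, 0) = ε(θ) and i_f'·(a, 0) = ε(θ'). In particular there exists θ ∈ ℝ with the second component of ε(θ) equal to zero. -/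
noncomputable section
open Matrix

/-- Solvability of the rotor angle and excitation current equation:
with ε(θ) = α_c r(δ_c − θ) + α_sa r(δ_sa + θ) and a ≠ 0, there are solutions
(i_f, θ) ∈ ℝ₊ × ℝ and (i_f', θ') ∈ ℝ₋ × ℝ of i_f (a,0) = ε(θ); in particular some
θ makes the second component of ε(θ) vanish. -/
theorem rotor_angle_solvability (αc αsa δc δsa : ℝ) (hαc : 0 ≤ αc) (hαsa : 0 ≤ αsa)
    (ε : ℝ → V2) (hε : ∀ θ, ε θ = αc • rvec (δc - θ) + αsa • rvec (δsa + θ))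
    (a : ℝ) (ha : a ≠ 0) :
    (∃ i_f θ : ℝ, 0 ≤ i_f ∧ i_f • (![a, 0] : V2) = ε θ) ∧
    (∃ i_f' θ' : ℝ, i_f' ≤ 0 ∧ i_f' • (![a, 0] : V2) = ε θ') ∧
    (∃ θ : ℝ, ε θ 1 = 0) := by
  -- key antiperiodicity: ε(θ+π) = -ε(θ)
  have key : ∀ θ, ε (θ + Real.pi) = -ε θ := by
    intro θ
    rw [hε, hε]
    funext i
    fin_cases i <;>
      simp [rvec, Real.cos_add, Real.sin_add, Real.cos_sub, Real.sin_sub] <;> ring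
  -- the second component function
  set f : ℝ → ℝ := fun θ => ε θ 1 with hf
  have hcont : Continuous f := by
    have : f = fun θ => αc * Real.sin (δc - θ) + αsa * Real.sin (δsa + θ) := by
      funext θ; simp [hf, hε θ, rvec]
    rw [this]; fun_prop
  have hanti : ∀ θ, f (θ + Real.pi) = -f θ := by
    intro θ; simp [hf, key θ]
  -- find θ0 with f θ0 = 0
  obtain ⟨θ0, hθ0⟩ : ∃ θ, f θ = 0 := by
    rcases le_or_gt 0 (f 0) with h | h
    · have h1 : f Real.pi ≤ 0 := by
        have := hanti 0; simp at this; linarith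
      obtain ⟨c, _, hc⟩ := intermediate_value_Icc' (le_of_lt Real.pi_pos)
        hcont.continuousOn (Set.mem_Icc.mpr ⟨h1, h⟩)
      exact ⟨c, hc⟩
    · have h1 : 0 ≤ f Real.pi := by
        have := hanti 0; simp at this; linarith
      obtain ⟨c, _, hc⟩ := intermediate_value_Icc (le_of_lt Real.pi_pos)
        hcont.continuousOn (Set.mem_Icc.mpr ⟨le_of_lt h, h1⟩)
      exact ⟨c, hc⟩
  have hθ0' : ε θ0 1 = 0 := hθ0
  have hθ1 : ε (θ0 + Real.pi) 1 = 0 := by rw [key θ0]; simp [hθ0']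
  -- solutions
  have sol : ∀ θ, ε θ 1 = 0 → (ε θ 0 / a) • (![a, 0] : V2) = ε θ := by
    intro θ hz
    funext i
    fin_cases i
    · simp [div_mul_cancel₀ _ ha]
    · simpa using hz.symm
  have hneg : ε (θ0 + Real.pi) 0 = -(ε θ0 0) := by rw [key θ0]; simp
  rcases le_or_gt 0 (ε θ0 0 / a) with h | h
  · refine ⟨⟨_, θ0, h, sol θ0 hθ0'⟩, ⟨_, θ0 + Real.pi, ?_, sol _ hθ1⟩, θ0, hθ0'⟩
    rw [hneg]; rw [neg_div]; linarith
  · refine ⟨⟨_, θ0 + Real.pi, ?_, sol _ hθ1⟩, ⟨_, θ0, le_of_lt h, sol θ0 hθ0'⟩, θ0, hθ0'⟩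
    rw [hneg]; rw [neg_div]; linarith
end
end
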